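/- arXiv:2004.00968 — 3 statements merged into one kernel-verified Lean document; each statement's English description precedes it below -/
import Mathlib

section
/- Theorem 1(i) (smallest root of P gives the angle equality): Suppose β* ∈ (0,1) is a root of P (P(β*) = 0) and β* is the smallest root of P in (0,1), i.e. every β' ∈ (0,1) with P(β') = 0 satisfies β* ≤ β'. Then the combined direction d(β*) makes the angle equality exact: −⟪g, d(β*)⟫ = ε ‖g‖ ‖d(β*)‖. -/
open scoped RealInnerProductSpace

noncomputable def dvec {n : ℕ} (g d : EuclideanSpace ℝ (Fin n)) (ξ β : ℝ) :
    EuclideanSpace ℝ (Fin n) :=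
  β • d - ((1 - β) * ξ) • g

noncomputable def Ppoly {n : ℕ} (g d : EuclideanSpace ℝ (Fin n)) (ε ξ β : ℝ) : ℝ :=
  (⟪g, d⟫ ^ 2 - ε ^ 2 * ‖g‖ ^ 2 * ‖d‖ ^ 2
      - (-2 * (1 - ε ^ 2) * ξ * ‖g‖ ^ 2 * (ξ * ‖g‖ ^ 2 + ⟪g, d⟫))
      - (1 - ε ^ 2) * ξ ^ 2 * ‖g‖ ^ 4) * β ^ 2
    + (-2 * (1 - ε ^ 2) * ξ * ‖g‖ ^ 2 * (ξ * ‖g‖ ^ 2 + ⟪g, d⟫)) * β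
    + (1 - ε ^ 2) * ξ ^ 2 * ‖g‖ ^ 4

lemma Ppoly_eq_key {n : ℕ} (g d : EuclideanSpace ℝ (Fin n)) (ε ξ β : ℝ) :
    Ppoly g d ε ξ β
      = ⟪g, dvec g d ξ β⟫ ^ 2 - ε ^ 2 * ‖g‖ ^ 2 * ‖dvec g d ξ β‖ ^ 2 := by
  have hdv : ‖dvec g d ξ β‖ ^ 2 = ⟪dvec g d ξ β, dvec g d ξ β⟫ :=
    (real_inner_self_eq_norm_sq _).symm
  rw [hdv]
  simp only [Ppoly, dvec, inner_sub_left, inner_sub_right, real_inner_smul_left,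
    real_inner_smul_right, real_inner_comm d g, real_inner_self_eq_norm_sq,
    norm_smul, mul_pow, Real.norm_eq_abs, sq_abs]
  ring

lemma dvec_ne_zero {n : ℕ} (g d : EuclideanSpace ℝ (Fin n))
    (hind : LinearIndependent ℝ ![g, d]) (ξ β : ℝ) (hξ : 0 < ξ)
    (hβ : β ∈ Set.Icc (0 : ℝ) 1) : dvec g d ξ β ≠ 0 := by
  intro h
  have h2 : (-((1 - β) * ξ)) • g + β • d = 0 := by
    rw [← h]; simp [dvec, sub_eq_add_neg, add_comm]
  obtain ⟨h3, h4⟩ := (LinearIndependent.pair_iff.mp hind) _ _ h2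
  have hβ1 : β = 1 := by
    by_contra hb
    have : (1 - β) * ξ ≠ 0 := by
      have : 1 - β ≠ 0 := sub_ne_zero.mpr (Ne.symm hb)
      positivity
    exact this (by linarith [neg_eq_zero.mp h3])
  exact one_ne_zero (hβ1 ▸ h4)

/-- Theorem 1(i): if βs is the smallest root in (0,1) of the quadratic polynomial P,
then the combined direction d(βs) makes the angle equality exact. -/
theorem smallest_root_gives_angle_equality {n : ℕ} (g d : EuclideanSpace ℝ (Fin n))
    (hind : LinearIndependent ℝ ![g, d]) (ε ξ : ℝ)
    (hε : ε ∈ Set.Ioo (0 : ℝ) 1) (hξ : 0 < ξ)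
    (hviol : -⟪g, d⟫ < ε * ‖g‖ * ‖d‖)
    (βs : ℝ) (hβs : βs ∈ Set.Ioo (0 : ℝ) 1)
    (hroot : Ppoly g d ε ξ βs = 0)
    (hsmallest : ∀ β' ∈ Set.Ioo (0 : ℝ) 1, Ppoly g d ε ξ β' = 0 → βs ≤ β') :
    -⟪g, dvec g d ξ βs⟫ = ε * ‖g‖ * ‖dvec g d ξ βs‖ := by
  obtain ⟨hβ0, hβ1⟩ := hβs
  obtain ⟨hε0, hε1⟩ := hε
  have hg : g ≠ 0 := by
    have := hind.ne_zero 0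
    simpa using this
  have hgn : 0 < ‖g‖ := norm_pos_iff.mpr hg
  have hdvs : dvec g d ξ βs ≠ 0 :=
    dvec_ne_zero g d hind ξ βs hξ ⟨le_of_lt hβ0, le_of_lt hβ1⟩
  have hys : 0 < ε * ‖g‖ * ‖dvec g d ξ βs‖ := by
    have := norm_pos_iff.mpr hdvs
    positivity
  -- from hroot, inner squared equals (ε‖g‖‖dvec‖)²
  have hsq : ⟪g, dvec g d ξ βs⟫ ^ 2 = (ε * ‖g‖ * ‖dvec g d ξ βs‖) ^ 2 := by
    have := Ppoly_eq_key g d ε ξ βs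
    rw [hroot] at this
    nlinarith [this]
  rcases sq_eq_sq_iff_eq_or_eq_neg.mp hsq with h | h
  · -- then f βs < 0, get a smaller root by IVT, contradiction
    exfalso
    set f : ℝ → ℝ := fun β => -⟪g, dvec g d ξ β⟫ - ε * ‖g‖ * ‖dvec g d ξ β‖ with hf
    have hcont : Continuous f := by
      have hdc : Continuous fun β => dvec g d ξ β := by
        unfold dvec; fun_prop
      have h1 : Continuous fun β => ⟪g, dvec g d ξ β⟫ := continuous_const.inner hdc
      exact h1.neg.sub (continuous_const.mul hdc.norm)
    have hf0 : 0 < f 0 := by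
      have hd0 : dvec g d ξ 0 = -(ξ • g) := by
        simp [dvec]
      simp only [hf, hd0, inner_neg_right, real_inner_smul_right, norm_neg, norm_smul,
        Real.norm_eq_abs, abs_of_pos hξ, real_inner_self_eq_norm_sq]
      nlinarith [mul_pos (mul_pos (sub_pos.mpr hε1) hξ) (mul_pos hgn hgn)]
    have hfβs : f βs < 0 := by
      simp only [hf, h]
      nlinarith
    have hiv := intermediate_value_Ioo' (le_of_lt hβ0) hcont.continuousOn
    have h0mem : (0 : ℝ) ∈ Set.Ioo (f βs) (f 0) := ⟨hfβs, hf0⟩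
    obtain ⟨β', hβ'mem, hβ'eq⟩ := hiv h0mem
    have hfe : -⟪g, dvec g d ξ β'⟫ = ε * ‖g‖ * ‖dvec g d ξ β'‖ := by
      have : f β' = 0 := hβ'eq
      simp only [hf] at this
      linarith
    have hP' : Ppoly g d ε ξ β' = 0 := by
      rw [Ppoly_eq_key]
      have h2 : ε ^ 2 * ‖g‖ ^ 2 * ‖dvec g d ξ β'‖ ^ 2
          = (-⟪g, dvec g d ξ β'⟫) ^ 2 := by rw [hfe]; ring
      rw [h2]; ring
    have := hsmallest β' ⟨hβ'mem.1, lt_trans hβ'mem.2 hβ1⟩ hP'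
    linarith [hβ'mem.2]
  · linarith [h]
end

section
/- Theorem 2 (global convergence of the SD-globalized line-search method): Let f : ℝⁿ → ℝ be of class C², and let (x_k), (d_k) ⊂ ℝⁿ and (α_k) ⊂ ℝ be sequences with x_{k+1} = x_k + α_k d_k for all k. Write g_k = ∇f(x_k) and assume g_k ≠ 0 for all k, and that there exist constants ε_min > 0, 0 < m ≤ M, σ₁ ∈ (0,1) and τ ∈ (0,1) such that for every k: (angle criterion) −⟪g_k, d_k⟫ ≥ ε_min ‖g_k‖ ‖d_k‖; (norm bounds) m ‖g_k‖ ≤ ‖d_k‖ ≤ M ‖g_k‖; (step length) 0 < α_k ≤ 1 and the Armijo condition f(x_k + α_k d_k) ≤ f(x_k) + σ₁ α_k ⟪g_k, d_k⟫ holds; (backtracking) either α_k = 1 or the Armijo condition fails at the previous trial step, i.e. f(x_k + (α_k/τ) d_k) > f(x_k) + σ₁ (α_k/τ) ⟪g_k, d_k⟫. Then every cluster point x̂ of the sequence (x_k) (i.e. every limit of a convergent subsequence) is stationary: ∇f(x̂) = 0. -/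
open scoped RealInnerProductSpace
open Filter Topology

/-! Armijo's condition together with the angle and norm bounds makes each step decrease `f` by at
least `c α_k ‖∇f(x_k)‖²`, and `f(x_k)` decreases to `f(x̂)`, so `α_k ‖∇f(x_k)‖² → 0`. If
`∇f(x̂) ≠ 0`, the steps along a subsequence converging to `x̂` therefore tend to `0`, so eventually
they were backtracked: the Armijo test failed at `α_k / τ`. By the mean value theorem the gradient
then changes by at least `(1 - σ₁) ε_min ‖∇f(x_k)‖` within distance `(α_k / τ) ‖d_k‖ → 0` of `x_k`,
which contradicts the continuity of `∇f` at `x̂`. -/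

section InnerProductSpace

variable {E : Type*} [NormedAddCommGroup E] [InnerProductSpace ℝ E]

theorem ContDiff.continuous_gradient [CompleteSpace E] {f : E → ℝ} {n : WithTop ℕ∞}
    (hf : ContDiff ℝ n f) (hn : n ≠ 0) : Continuous (gradient f) :=
  (InnerProductSpace.toDual ℝ E).symm.continuous.comp (hf.continuous_fderiv hn)

theorem hasDerivAt_apply_add_smul [CompleteSpace E] {f : E → ℝ}
    (hf : Differentiable ℝ f) (x d : E) (t : ℝ) :
    HasDerivAt (fun s : ℝ => f (x + s • d)) ⟪gradient f (x + t • d), d⟫ t := by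
  have hline : HasDerivAt (fun s : ℝ => x + s • d) d t := by
    simpa using ((hasDerivAt_id t).smul_const d).const_add x
  simpa [InnerProductSpace.toDual_apply_apply, Function.comp_def] using
    (hasGradientAt_iff_hasFDerivAt.mp (hf _).hasGradientAt).comp_hasDerivAt t hline

theorem exists_mem_Ioo_sub_eq_mul_inner_gradient [CompleteSpace E] {f : E → ℝ}
    (hf : Differentiable ℝ f) (x d : E) {β : ℝ} (hβ : 0 < β) :
    ∃ t ∈ Set.Ioo 0 β, f (x + β • d) - f x = β * ⟪gradient f (x + t • d), d⟫ := by
  have hderiv := hasDerivAt_apply_add_smul hf x d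
  obtain ⟨t, ht, hslope⟩ := exists_hasDerivAt_eq_slope _ _ hβ
    (fun t _ => (hderiv t).continuousAt.continuousWithinAt) (fun t _ => hderiv t)
  refine ⟨t, ht, ?_⟩
  rw [hslope, zero_smul, add_zero, sub_zero]
  field_simp

theorem armijo_sufficient_decrease {g d : E} {a b α σ ε m : ℝ} (hσ : 0 ≤ σ) (hα : 0 ≤ α)
    (hε : 0 ≤ ε) (hangle : ε * ‖g‖ * ‖d‖ ≤ -⟪g, d⟫) (hlow : m * ‖g‖ ≤ ‖d‖)
    (harmijo : b ≤ a + σ * α * ⟪g, d⟫) :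
    σ * ε * m * (α * ‖g‖ ^ 2) ≤ a - b :=
  calc σ * ε * m * (α * ‖g‖ ^ 2) = σ * α * (ε * ‖g‖ * (m * ‖g‖)) := by ring
    _ ≤ σ * α * (ε * ‖g‖ * ‖d‖) := by gcongr
    _ ≤ σ * α * -⟪g, d⟫ := by gcongr
    _ ≤ a - b := by linarith

theorem exists_gradient_gap_of_not_armijo [CompleteSpace E] {f : E → ℝ}
    (hf : Differentiable ℝ f) {x d : E} {β σ ε : ℝ} (hβ : 0 < β) (hσ : σ ≤ 1)
    (hangle : ε * ‖gradient f x‖ * ‖d‖ ≤ -⟪gradient f x, d⟫)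
    (hfail : f x + σ * β * ⟪gradient f x, d⟫ < f (x + β • d)) :
    ∃ ξ, ‖ξ - x‖ ≤ β * ‖d‖ ∧ (1 - σ) * ε * ‖gradient f x‖ < ‖gradient f ξ - gradient f x‖ := by
  obtain ⟨t, ht, hmvt⟩ := exists_mem_Ioo_sub_eq_mul_inner_gradient hf x d hβ
  refine ⟨x + t • d, ?_, ?_⟩
  · rw [add_sub_cancel_left, norm_smul, Real.norm_of_nonneg ht.1.le]
    gcongr
    exact ht.2.le
  · have hslope : σ * ⟪gradient f x, d⟫ < ⟪gradient f (x + t • d), d⟫ :=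
      lt_of_mul_lt_mul_left (by linarith) hβ.le
    refine lt_of_mul_lt_mul_right ?_ (norm_nonneg d)
    calc (1 - σ) * ε * ‖gradient f x‖ * ‖d‖
        = (1 - σ) * (ε * ‖gradient f x‖ * ‖d‖) := by ring
      _ ≤ (1 - σ) * -⟪gradient f x, d⟫ := by gcongr
      _ < ⟪gradient f (x + t • d) - gradient f x, d⟫ := by rw [inner_sub_left]; linarith
      _ ≤ ‖gradient f (x + t • d) - gradient f x‖ * ‖d‖ := real_inner_le_norm _ _

end InnerProductSpace

theorem tendsto_zero_of_mul_le_sub_succ {u a : ℕ → ℝ} {c L : ℝ} (hc : 0 < c)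
    (ha : ∀ k, 0 ≤ a k) (hu : Tendsto u atTop (𝓝 L)) (h : ∀ k, c * a k ≤ u k - u (k + 1)) :
    Tendsto a atTop (𝓝 0) := by
  have hdiff : Tendsto (fun k => (u k - u (k + 1)) / c) atTop (𝓝 0) := by
    simpa using (hu.sub (hu.comp (tendsto_add_atTop_nat 1))).div_const c
  refine squeeze_zero ha (fun k => ?_) hdiff
  rw [le_div_iff₀ hc, mul_comm]
  exact h k

theorem tendsto_zero_of_tendsto_mul_zero {ι : Type*} {l : Filter ι} {a b : ι → ℝ} {b₀ : ℝ}
    (hab : Tendsto (fun i => a i * b i) l (𝓝 0)) (hb : Tendsto b l (𝓝 b₀)) (hb₀ : b₀ ≠ 0) :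
    Tendsto a l (𝓝 0) := by
  have hquot := hab.mul (hb.inv₀ hb₀)
  rw [zero_mul] at hquot
  refine hquot.congr' ?_
  filter_upwards [hb.eventually_ne hb₀] with i hi
  simp [hi]

theorem eq_zero_of_eventually_exists_gap {E F ι : Type*} [SeminormedAddCommGroup E]
    [NormedAddCommGroup F] {G : E → F} {x₀ : E} (hG : ContinuousAt G x₀) {l : Filter ι}
    [l.NeBot] {y : ι → E} {r : ι → ℝ} (hy : Tendsto y l (𝓝 x₀)) (hr : Tendsto r l (𝓝 0))
    {c : ℝ} (hc : 0 < c)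
    (hgap : ∀ᶠ i in l, ∃ ξ, ‖ξ - y i‖ ≤ r i ∧ c * ‖G (y i)‖ < ‖G ξ - G (y i)‖) :
    G x₀ = 0 := by
  obtain ⟨ξ, hξ⟩ := hgap.choice
  have hξy : Tendsto (fun i => ξ i - y i) l (𝓝 0) := by
    rw [tendsto_zero_iff_norm_tendsto_zero]
    exact squeeze_zero' (.of_forall fun _ => norm_nonneg _) (hξ.mono fun _ h => h.1) hr
  have hξlim : Tendsto ξ l (𝓝 x₀) := by
    simpa using hξy.add hy
  have hGdiff : Tendsto (fun i => ‖G (ξ i) - G (y i)‖) l (𝓝 0) := by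
    simpa using ((hG.tendsto.comp hξlim).sub (hG.tendsto.comp hy)).norm
  have hle : c * ‖G x₀‖ ≤ 0 :=
    le_of_tendsto_of_tendsto ((hG.tendsto.comp hy).norm.const_mul c) hGdiff
      (hξ.mono fun _ h => h.2.le)
  exact norm_le_zero_iff.mp (nonpos_of_mul_nonpos_right hle hc)

theorem sdg_global_convergence_general {n : ℕ} (f : EuclideanSpace ℝ (Fin n) → ℝ)
    (hf : ContDiff ℝ 2 f)
    (x d : ℕ → EuclideanSpace ℝ (Fin n)) (α : ℕ → ℝ)
    (εmin m M σ₁ τ : ℝ)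
    (hεmin : 0 < εmin) (hm : 0 < m)
    (hσ₁ : σ₁ ∈ Set.Ioo (0 : ℝ) 1) (hτ : τ ∈ Set.Ioo (0 : ℝ) 1)
    (hupdate : ∀ k, x (k + 1) = x k + α k • d k)
    (hangle : ∀ k, -⟪gradient f (x k), d k⟫ ≥ εmin * ‖gradient f (x k)‖ * ‖d k‖)
    (hlow : ∀ k, m * ‖gradient f (x k)‖ ≤ ‖d k‖)
    (hupp : ∀ k, ‖d k‖ ≤ M * ‖gradient f (x k)‖)
    (hαpos : ∀ k, 0 < α k)
    (harmijo : ∀ k, f (x k + α k • d k) ≤ f (x k) + σ₁ * α k * ⟪gradient f (x k), d k⟫)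
    (hback : ∀ k, α k = 1 ∨
      f (x k + (α k / τ) • d k) > f (x k) + σ₁ * (α k / τ) * ⟪gradient f (x k), d k⟫)
    (xhat : EuclideanSpace ℝ (Fin n))
    (hcluster : ∃ φ : ℕ → ℕ, StrictMono φ ∧
      Filter.Tendsto (fun j => x (φ j)) Filter.atTop (nhds xhat)) :
    gradient f xhat = 0 := by
  obtain ⟨φ, hφ, hxφ⟩ := hcluster
  have hG := hf.continuous_gradient two_ne_zero
  have hGφ := ((hG.tendsto xhat).comp hxφ).norm
  have hc : 0 < σ₁ * εmin * m := by have := hσ₁.1; positivity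
  have hdecr k : σ₁ * εmin * m * (α k * ‖gradient f (x k)‖ ^ 2) ≤ f (x k) - f (x (k + 1)) :=
    hupdate k ▸ armijo_sufficient_decrease hσ₁.1.le (hαpos k).le hεmin.le (hangle k) (hlow k)
      (harmijo k)
  have hαg_nonneg k : 0 ≤ α k * ‖gradient f (x k)‖ ^ 2 := by have := hαpos k; positivity
  have hanti : Antitone (f ∘ x) := antitone_nat_of_succ_le fun k =>
    sub_nonneg.mp ((mul_nonneg hc.le (hαg_nonneg k)).trans (hdecr k))
  have hfx : Tendsto (f ∘ x) atTop (𝓝 (f xhat)) :=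
    (tendsto_iff_tendsto_subseq_of_antitone hanti hφ.tendsto_atTop).mpr
      ((hf.continuous.tendsto xhat).comp hxφ)
  have hαg := tendsto_zero_of_mul_le_sub_succ hc hαg_nonneg hfx hdecr
  by_contra hne
  have hαφ : Tendsto (α ∘ φ) atTop (𝓝 0) :=
    tendsto_zero_of_tendsto_mul_zero (hαg.comp hφ.tendsto_atTop) (hGφ.pow 2) (by simpa)
  have hr : Tendsto (fun j => α (φ j) / τ * (M * ‖gradient f (x (φ j))‖)) atTop (𝓝 0) := by
    simpa using (hαφ.div_const τ).mul (hGφ.const_mul M)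
  have hgap : ∀ᶠ j in atTop, ∃ ξ, ‖ξ - x (φ j)‖ ≤ α (φ j) / τ * (M * ‖gradient f (x (φ j))‖) ∧
      (1 - σ₁) * εmin * ‖gradient f (x (φ j))‖ < ‖gradient f ξ - gradient f (x (φ j))‖ := by
    filter_upwards [hαφ.eventually_lt_const one_pos] with j hj
    have hβ : 0 < α (φ j) / τ := div_pos (hαpos _) hτ.1
    obtain ⟨ξ, hξ, hgap⟩ := exists_gradient_gap_of_not_armijo (hf.differentiable two_ne_zero) hβ
      hσ₁.2.le (hangle _) ((hback _).resolve_left hj.ne)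
    exact ⟨ξ, hξ.trans (mul_le_mul_of_nonneg_left (hupp _) hβ.le), hgap⟩
  exact hne (eq_zero_of_eventually_exists_gap hG.continuousAt hxφ hr
    (mul_pos (sub_pos.mpr hσ₁.2) hεmin) hgap)

/-- Theorem 2: global convergence of the SD-globalized line-search method.
Under the angle criterion, norm bounds making the directions gradient related,
and Armijo backtracking step lengths starting from the unit step, every cluster
point of the iterates is stationary. -/
theorem sdg_global_convergence {n : ℕ} (f : EuclideanSpace ℝ (Fin n) → ℝ)
    (hf : ContDiff ℝ 2 f)
    (x d : ℕ → EuclideanSpace ℝ (Fin n)) (α : ℕ → ℝ)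
    (εmin m M σ₁ τ : ℝ)
    (hεmin : 0 < εmin) (hm : 0 < m) (hmM : m ≤ M)
    (hσ₁ : σ₁ ∈ Set.Ioo (0 : ℝ) 1) (hτ : τ ∈ Set.Ioo (0 : ℝ) 1)
    (hupdate : ∀ k, x (k + 1) = x k + α k • d k)
    (hgne : ∀ k, gradient f (x k) ≠ 0)
    (hangle : ∀ k, -⟪gradient f (x k), d k⟫ ≥ εmin * ‖gradient f (x k)‖ * ‖d k‖)
    (hlow : ∀ k, m * ‖gradient f (x k)‖ ≤ ‖d k‖)
    (hupp : ∀ k, ‖d k‖ ≤ M * ‖gradient f (x k)‖)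
    (hαpos : ∀ k, 0 < α k) (hαle : ∀ k, α k ≤ 1)
    (harmijo : ∀ k, f (x k + α k • d k) ≤ f (x k) + σ₁ * α k * ⟪gradient f (x k), d k⟫)
    (hback : ∀ k, α k = 1 ∨
      f (x k + (α k / τ) • d k) > f (x k) + σ₁ * (α k / τ) * ⟪gradient f (x k), d k⟫)
    (xhat : EuclideanSpace ℝ (Fin n))
    (hcluster : ∃ φ : ℕ → ℕ, StrictMono φ ∧
      Filter.Tendsto (fun j => x (φ j)) Filter.atTop (nhds xhat)) :
    gradient f xhat = 0 :=
  sdg_global_convergence_general f hf x d α εmin m M σ₁ τ hεmin hm hσ₁ hτ hupdate hangle hlow hupp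
    hαpos harmijo hback xhat hcluster
end

section
/- One-step quadratic contraction of the Newton step (the key estimate underlying Theorem 3's quadratic convergence rate): Let f : ℝⁿ → ℝ be of class C², let x̂ ∈ ℝⁿ satisfy ∇f(x̂) = 0, let H(x) denote the Hessian of f at x (the Fréchet derivative of the gradient map, a continuous linear map ℝⁿ → ℝⁿ), and assume: (i) H(x̂) is positive definite, i.e. ⟪H(x̂) v, v⟫ > 0 for all v ≠ 0; (ii) H is Lipschitz near x̂, i.e. there exist r > 0 and L > 0 with ‖H(x) − H(y)‖ ≤ L ‖x − y‖ in operator norm for all x, y in the closed ball of radius r around x̂. Then there exist δ > 0 and C > 0 such that for every x with ‖x − x̂‖ < δ there is a unique s ∈ ℝⁿ with H(x) s = ∇f(x), and the Newton iterate x⁺ = x − s satisfies ‖x⁺ − x̂‖ ≤ C ‖x − x̂‖². -/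
/-!
Positive definiteness makes `H x̂` injective, hence (in finite dimension) antilipschitz with
some constant `K`. A perturbation of operator norm at most `1 / (2K)` stays antilipschitz with
constant `2K`, so by the Lipschitz bound `H x` is invertible with `‖w‖ ≤ 2K ‖H x w‖` once
`‖x - x̂‖ < 1 / (2KL)`. The Newton error `e = x - s - x̂` satisfies
`H x e = ∇f x̂ - ∇f x - H x (x̂ - x)`, which the mean value inequality bounds by `L ‖x - x̂‖²`.
-/

open scoped RealInnerProductSpace NNReal

section InnerProductSpace

variable {F : Type*} [NormedAddCommGroup F] [InnerProductSpace ℝ F]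

theorem ContDiff.gradient [CompleteSpace F] {f : F → ℝ} {m n : WithTop ℕ∞}
    (hf : ContDiff ℝ n f) (hmn : m + 1 ≤ n) : ContDiff ℝ m (_root_.gradient f) :=
  (InnerProductSpace.toDual ℝ F).symm.contDiff.comp (hf.fderiv_right hmn)

theorem ContinuousLinearMap.injective_of_forall_inner_map_pos {T : F →L[ℝ] F}
    (hT : ∀ v, v ≠ 0 → 0 < ⟪T v, v⟫) : Function.Injective T := by
  refine (injective_iff_map_eq_zero T).mpr fun v hv => ?_
  by_contra hne
  simpa [hv] using hT v hne

end InnerProductSpace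

section NormedSpace

variable {𝕜 E F : Type*} [NontriviallyNormedField 𝕜] [NormedAddCommGroup E] [NormedSpace 𝕜 E]
  [NormedAddCommGroup F] [NormedSpace 𝕜 F]

theorem ContinuousLinearMap.antilipschitz_of_norm_sub_le {S T : E →L[𝕜] F} {K : ℝ≥0}
    (hT : AntilipschitzWith K T) (hK : 0 < K) (hST : ‖S - T‖ ≤ (2 * (K : ℝ))⁻¹) :
    AntilipschitzWith (2 * K) S := by
  refine S.antilipschitz_of_bound fun w => ?_
  have hTw : ‖T w‖ ≤ ‖S w‖ + ‖S - T‖ * ‖w‖ := calc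
    ‖T w‖ = ‖S w - (S - T) w‖ := by simp
    _ ≤ ‖S w‖ + ‖(S - T) w‖ := norm_sub_le _ _
    _ ≤ ‖S w‖ + ‖S - T‖ * ‖w‖ := by gcongr; exact (S - T).le_opNorm w
  have hK' : (0 : ℝ) < K := hK
  have hKST : (K : ℝ) * ‖S - T‖ ≤ 1 / 2 := calc
    (K : ℝ) * ‖S - T‖ ≤ K * (2 * K : ℝ)⁻¹ := by gcongr
    _ = 1 / 2 := by field_simp
  have hw : ‖w‖ ≤ K * ‖S w‖ + 1 / 2 * ‖w‖ := calc
    ‖w‖ ≤ K * ‖T w‖ := T.bound_of_antilipschitz hT w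
    _ ≤ K * (‖S w‖ + ‖S - T‖ * ‖w‖) := by gcongr
    _ = K * ‖S w‖ + (K * ‖S - T‖) * ‖w‖ := by ring
    _ ≤ K * ‖S w‖ + 1 / 2 * ‖w‖ := by gcongr
  push_cast
  linarith

theorem norm_newton_error_le {g : E → F} {A : E →L[𝕜] F} {K : ℝ≥0} (hA : AntilipschitzWith K A)
    {x s x₀ : E} (hs : A s = g x) (hx₀ : g x₀ = 0) :
    ‖x - s - x₀‖ ≤ K * ‖g x₀ - g x - A (x₀ - x)‖ := by
  have hAerr : A (x - s - x₀) = g x₀ - g x - A (x₀ - x) := by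
    simp only [map_sub, hs, hx₀]
    abel
  simpa only [hAerr] using A.bound_of_antilipschitz hA (x - s - x₀)

end NormedSpace

theorem Convex.norm_image_sub_sub_fderiv_le_of_lipschitz {E F : Type*} [NormedAddCommGroup E]
    [NormedSpace ℝ E] [NormedAddCommGroup F] [NormedSpace ℝ F] {g : E → F} {s : Set E}
    {x y : E} {L : ℝ} (hs : Convex ℝ s) (hg : ∀ z ∈ s, DifferentiableAt ℝ g z) (hL : 0 ≤ L)
    (hlip : ∀ z ∈ s, ‖fderiv ℝ g z - fderiv ℝ g x‖ ≤ L * ‖z - x‖) (hx : x ∈ s) (hy : y ∈ s) :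
    ‖g y - g x - fderiv ℝ g x (y - x)‖ ≤ L * ‖y - x‖ ^ 2 := by
  set t := s ∩ Metric.closedBall x ‖y - x‖
  have hbound : ∀ z ∈ t, ‖fderiv ℝ g z - fderiv ℝ g x‖ ≤ L * ‖y - x‖ := fun z hz => by
    refine (hlip z hz.1).trans (mul_le_mul_of_nonneg_left ?_ hL)
    simpa [dist_eq_norm] using hz.2
  have := (hs.inter (convex_closedBall x _)).norm_image_sub_le_of_norm_fderiv_le'
    (fun z hz => hg z hz.1) hbound ⟨hx, Metric.mem_closedBall_self (norm_nonneg _)⟩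
    ⟨hy, by simp [dist_eq_norm]⟩
  linarith

/-- One-step quadratic contraction of the Newton step: if f is C², ∇f(x̂) = 0, the Hessian
H(x) = D(∇f)(x) is positive definite at x̂ and Lipschitz (in operator norm) on a closed ball
around x̂, then there are δ > 0 and C > 0 such that for any x with ‖x − x̂‖ < δ the Newton
system H(x) s = ∇f(x) has a unique solution s, and x⁺ = x − s satisfies
‖x⁺ − x̂‖ ≤ C ‖x − x̂‖². -/
theorem newton_one_step_quadratic {n : ℕ} (f : EuclideanSpace ℝ (Fin n) → ℝ)
    (hf : ContDiff ℝ 2 f)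
    (xhat : EuclideanSpace ℝ (Fin n)) (hstat : gradient f xhat = 0)
    (hpos : ∀ v : EuclideanSpace ℝ (Fin n), v ≠ 0 →
      0 < ⟪fderiv ℝ (gradient f) xhat v, v⟫)
    (r L : ℝ) (hr : 0 < r) (hL : 0 < L)
    (hlip : ∀ x ∈ Metric.closedBall xhat r, ∀ y ∈ Metric.closedBall xhat r,
      ‖fderiv ℝ (gradient f) x - fderiv ℝ (gradient f) y‖ ≤ L * ‖x - y‖) :
    ∃ δ > 0, ∃ C > 0, ∀ x : EuclideanSpace ℝ (Fin n), ‖x - xhat‖ < δ →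
      (∃! s : EuclideanSpace ℝ (Fin n), fderiv ℝ (gradient f) x s = gradient f x) ∧
      ∀ s : EuclideanSpace ℝ (Fin n), fderiv ℝ (gradient f) x s = gradient f x →
        ‖x - s - xhat‖ ≤ C * ‖x - xhat‖ ^ 2 := by
  set H := fderiv ℝ (gradient f)
  have hdiff : Differentiable ℝ (gradient f) :=
    (hf.gradient (by norm_num)).differentiable one_ne_zero
  obtain ⟨K, hK, hHxhat⟩ := (H xhat).toLinearMap.injective_iff_antilipschitz.mp
    (ContinuousLinearMap.injective_of_forall_inner_map_pos hpos)
  have hKL : 0 < 2 * (K : ℝ) * L := by have : (0 : ℝ) < K := hK; positivity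
  refine ⟨min r (2 * K * L)⁻¹, lt_min hr (inv_pos.mpr hKL), 2 * K * L, hKL, fun x hx => ?_⟩
  have hxr : x ∈ Metric.closedBall xhat r := by
    simpa [dist_eq_norm] using hx.le.trans (min_le_left _ _)
  have hHx : AntilipschitzWith (2 * K) (H x) := by
    refine ContinuousLinearMap.antilipschitz_of_norm_sub_le hHxhat hK ?_
    calc ‖H x - H xhat‖ ≤ L * ‖x - xhat‖ := hlip x hxr xhat (Metric.mem_closedBall_self hr.le)
      _ ≤ L * (2 * K * L)⁻¹ := by gcongr; exact hx.le.trans (min_le_right _ _)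
      _ = (2 * (K : ℝ))⁻¹ := by field_simp
  have hbij : Function.Bijective (H x) :=
    ⟨hHx.injective, LinearMap.injective_iff_surjective.mp hHx.injective⟩
  refine ⟨hbij.existsUnique _, fun s hs => ?_⟩
  calc ‖x - s - xhat‖ ≤ ↑(2 * K) * ‖gradient f xhat - gradient f x - H x (xhat - x)‖ :=
        norm_newton_error_le hHx hs hstat
    _ ≤ ↑(2 * K) * (L * ‖xhat - x‖ ^ 2) := by
        gcongr
        exact (convex_closedBall xhat r).norm_image_sub_sub_fderiv_le_of_lipschitz
          (fun z _ => hdiff z) hL.le (fun z hz => hlip z hz x hxr) hxr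
          (Metric.mem_closedBall_self hr.le)
    _ = 2 * K * L * ‖x - xhat‖ ^ 2 := by rw [norm_sub_rev]; push_cast; ring
end
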